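/- Let n ≥ 1, λ ∈ (0,1), γ ∈ [0,1), T : ℝ → ℝ, and let F : ℝ^n → ℝ^n be the globally coupled map built from T with coupling γ. Let p ≥ 1 and z ∈ ℝ^n, and suppose that T is differentiable at every coordinate of every point F^t(z) for t = 0, 1, …, p−1, with |T'| ≥ 1/λ at each such coordinate. Then |det(D(F^p)(z))| ≥ ((1−γ)^n · λ^{−n} / (1−γ))^p. In particular, if λ < 1 − γ then |det(D(F^p)(z))| ≥ r^{np}/(1−γ)^p with r = (1−γ)/λ > 1. -/

import Mathlib

open Set

/-- The globally coupled map `F : ℝ^n → ℝ^n` built from a local map `T : ℝ → ℝ` with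
coupling strength `γ`: `F(y)_i = (1-γ)·T(y_i) + (γ/n)·∑_j T(y_j)`. -/
noncomputable def coupledMap (n : ℕ) (γ : ℝ) (T : ℝ → ℝ) :
    (Fin n → ℝ) → (Fin n → ℝ) :=
  fun y i => (1 - γ) * T (y i) + (γ / n) * ∑ j, T (y j)

/-!
The Jacobian of `F` at `y` is `((1 - γ) I + (γ / n) J) · diag (T' (y_k))`, with `J` the all-ones
matrix. By the matrix determinant lemma its determinant is `(1 - γ)^(n-1) ∏ₖ T'(y_k)`, which the
expansion hypothesis bounds below by `(1 - γ)^(n-1) λ^(-n)`. By the chain rule `det D(F^p)(z)` is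
the product of these determinants along the orbit `z, F z, …, F^(p-1) z`.
-/

open Finset Matrix

theorem Matrix.det_smul_one_add_of_const {ι K : Type*} [Fintype ι] [DecidableEq ι] [Field K]
    {a : K} (ha : a ≠ 0) (b : K) :
    (a • (1 : Matrix ι ι K) + of fun _ _ => b).det =
      a ^ Fintype.card ι * (1 + Fintype.card ι * b / a) := by
  have h : (a • (1 : Matrix ι ι K) + of fun _ _ => b) =
      a • (1 + replicateCol Unit (fun _ => b / a) * replicateRow Unit (1 : ι → K)) := by
    ext i j
    simp [mul_add, mul_apply, mul_div_cancel₀ _ ha]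
  rw [h, det_smul, det_one_add_replicateCol_mul_replicateRow]
  simp [dotProduct, mul_div_assoc]

section Iterate

variable {𝕜 E : Type*} [NontriviallyNormedField 𝕜] [NormedAddCommGroup E] [NormedSpace 𝕜 E]
  {f : E → E} {x : E} {p : ℕ}

theorem differentiableAt_iterate_of_orbit
    (hf : ∀ t < p, DifferentiableAt 𝕜 f (f^[t] x)) : DifferentiableAt 𝕜 f^[p] x := by
  induction p with
  | zero => exact differentiableAt_id
  | succ p ih =>
    rw [Function.iterate_succ']
    exact (hf p p.lt_succ_self).comp x (ih fun t ht => hf t (ht.trans p.lt_succ_self))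

theorem det_fderiv_iterate_of_orbit
    (hf : ∀ t < p, DifferentiableAt 𝕜 f (f^[t] x)) :
    (fderiv 𝕜 f^[p] x).det = ∏ t ∈ range p, (fderiv 𝕜 f (f^[t] x)).det := by
  induction p with
  | zero => simp [fderiv_id, ContinuousLinearMap.det]
  | succ p ih =>
    have hf' : ∀ t < p, DifferentiableAt 𝕜 f (f^[t] x) :=
      fun t ht => hf t (ht.trans p.lt_succ_self)
    rw [Function.iterate_succ', fderiv_comp x (hf p p.lt_succ_self)
      (differentiableAt_iterate_of_orbit hf'), prod_range_succ, ← ih hf', mul_comm]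
    exact LinearMap.det_comp _ _

end Iterate

theorem pow_le_abs_det_fderiv_iterate {E : Type*} [NormedAddCommGroup E] [NormedSpace ℝ E]
    {f : E → E} {x : E} {p : ℕ} {c : ℝ} (hc : 0 ≤ c)
    (hf : ∀ t < p, DifferentiableAt ℝ f (f^[t] x))
    (hle : ∀ t < p, c ≤ |(fderiv ℝ f (f^[t] x)).det|) :
    c ^ p ≤ |(fderiv ℝ f^[p] x).det| := by
  rw [det_fderiv_iterate_of_orbit hf, abs_prod]
  calc c ^ p = ∏ _t ∈ range p, c := by rw [prod_const, card_range]
    _ ≤ _ := prod_le_prod (fun _ _ => hc) fun t ht => hle t (mem_range.1 ht)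

noncomputable def coupledMapJacobian (n : ℕ) (γ : ℝ) (c : Fin n → ℝ) : Matrix (Fin n) (Fin n) ℝ :=
  ((1 - γ) • 1 + of fun _ _ => γ / n) * diagonal c

theorem det_coupledMapJacobian {n : ℕ} (hn : n ≠ 0) {γ : ℝ} (hγ : γ ≠ 1) (c : Fin n → ℝ) :
    (coupledMapJacobian n γ c).det = (1 - γ) ^ n / (1 - γ) * ∏ k, c k := by
  have h1γ : 1 - γ ≠ 0 := sub_ne_zero.2 hγ.symm
  rw [coupledMapJacobian, det_mul, det_smul_one_add_of_const h1γ, det_diagonal, Fintype.card_fin]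
  congr 1
  field_simp
  ring

theorem hasFDerivAt_coupledMap {n : ℕ} (γ : ℝ) {T : ℝ → ℝ} {y : Fin n → ℝ}
    (hT : ∀ k, DifferentiableAt ℝ T (y k)) :
    HasFDerivAt (coupledMap n γ T)
      (toLin' (coupledMapJacobian n γ fun k => deriv T (y k))).toContinuousLinearMap y := by
  have hTk : ∀ j : Fin n, HasFDerivAt (fun w : Fin n → ℝ => T (w j))
      (deriv T (y j) • ContinuousLinearMap.proj j) y :=
    fun j => (hT j).hasDerivAt.comp_hasFDerivAt y
      (ContinuousLinearMap.proj j : (Fin n → ℝ) →L[ℝ] ℝ).hasFDerivAt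
  refine hasFDerivAt_pi'' fun i => (((hTk i).const_mul (1 - γ)).add
    ((HasFDerivAt.fun_sum fun j _ => hTk j).const_mul (γ / n))).congr_fderiv ?_
  ext v
  simp [coupledMapJacobian, mulVec, dotProduct, mul_diagonal, add_mul, mul_sum, diagonal_apply,
    mul_comm, mul_assoc]

theorem det_fderiv_coupledMap {n : ℕ} (hn : n ≠ 0) {γ : ℝ} (hγ : γ ≠ 1) {T : ℝ → ℝ}
    {y : Fin n → ℝ} (hT : ∀ k, DifferentiableAt ℝ T (y k)) :
    (fderiv ℝ (coupledMap n γ T) y).det = (1 - γ) ^ n / (1 - γ) * ∏ k, deriv T (y k) := by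
  rw [(hasFDerivAt_coupledMap γ hT).fderiv, ContinuousLinearMap.det,
    LinearMap.coe_toContinuousLinearMap, LinearMap.det_toLin', det_coupledMapJacobian hn hγ]

theorem le_abs_det_fderiv_coupledMap {n : ℕ} (hn : n ≠ 0) {γ lam : ℝ} (hγ : γ < 1)
    (hlam : 0 ≤ lam) {T : ℝ → ℝ} {y : Fin n → ℝ} (hT : ∀ k, DifferentiableAt ℝ T (y k))
    (hexp : ∀ k, 1 / lam ≤ |deriv T (y k)|) :
    (1 - γ) ^ n * lam⁻¹ ^ n / (1 - γ) ≤ |(fderiv ℝ (coupledMap n γ T) y).det| := by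
  have h1γ : 0 < 1 - γ := sub_pos.2 hγ
  have hprod : lam⁻¹ ^ n ≤ ∏ k, |deriv T (y k)| := by
    calc lam⁻¹ ^ n = ∏ _k : Fin n, lam⁻¹ := (Fin.prod_const n _).symm
      _ ≤ _ := prod_le_prod (fun _ _ => inv_nonneg.2 hlam) fun k _ => one_div lam ▸ hexp k
  rw [det_fderiv_coupledMap hn hγ.ne hT, abs_mul, abs_prod, abs_of_pos (by positivity),
    mul_div_right_comm]
  gcongr

theorem abs_det_fderiv_coupledMap_iterate_ge_general (n : ℕ) (hn : 1 ≤ n)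
    (lam γ : ℝ) (hlam : lam ∈ Ioo (0:ℝ) 1) (hγ : γ ∈ Ico (0:ℝ) 1)
    (T : ℝ → ℝ) (p : ℕ) (z : Fin n → ℝ)
    (hdiff : ∀ t < p, ∀ k : Fin n,
      DifferentiableAt ℝ T (((coupledMap n γ T)^[t] z) k))
    (hexp : ∀ t < p, ∀ k : Fin n,
      1 / lam ≤ |deriv T (((coupledMap n γ T)^[t] z) k)|) :
    ((1 - γ) ^ n * (lam⁻¹) ^ n / (1 - γ)) ^ p ≤
        |(fderiv ℝ ((coupledMap n γ T)^[p]) z).det| ∧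
      (lam < 1 - γ →
        (1 < (1 - γ) / lam ∧
          ((1 - γ) / lam) ^ (n * p) / (1 - γ) ^ p ≤
            |(fderiv ℝ ((coupledMap n γ T)^[p]) z).det|)) := by
  obtain ⟨hlam0, -⟩ := hlam
  obtain ⟨-, hγ1⟩ := hγ
  have h1γ : 0 < 1 - γ := sub_pos.2 hγ1
  have hdet : ((1 - γ) ^ n * lam⁻¹ ^ n / (1 - γ)) ^ p ≤
      |(fderiv ℝ ((coupledMap n γ T)^[p]) z).det| :=
    pow_le_abs_det_fderiv_iterate (by positivity)
      (fun t ht => (hasFDerivAt_coupledMap γ (hdiff t ht)).differentiableAt)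
      fun t ht => le_abs_det_fderiv_coupledMap (by omega) hγ1 hlam0.le (hdiff t ht) (hexp t ht)
  refine ⟨hdet, fun hlt => ⟨(one_lt_div hlam0).2 hlt, ?_⟩⟩
  calc ((1 - γ) / lam) ^ (n * p) / (1 - γ) ^ p
      = ((1 - γ) ^ n * lam⁻¹ ^ n / (1 - γ)) ^ p := by
        rw [pow_mul, ← div_pow, div_pow (1 - γ) lam n, inv_pow, ← div_eq_mul_inv]
    _ ≤ _ := hdet

/-- if `|T'| ≥ 1/λ` at every coordinate of every orbit point
`F^t(z)`, `t = 0,…,p−1`, then `|det D(F^p)(z)| ≥ ((1−γ)^n·λ^{−n}/(1−γ))^p`; in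
particular, if `λ < 1−γ` then `|det D(F^p)(z)| ≥ r^{np}/(1−γ)^p` where
`r = (1−γ)/λ > 1`. -/
theorem abs_det_fderiv_coupledMap_iterate_ge (n : ℕ) (hn : 1 ≤ n)
    (lam γ : ℝ) (hlam : lam ∈ Ioo (0:ℝ) 1) (hγ : γ ∈ Ico (0:ℝ) 1)
    (T : ℝ → ℝ) (p : ℕ) (hp : 1 ≤ p) (z : Fin n → ℝ)
    (hdiff : ∀ t < p, ∀ k : Fin n,
      DifferentiableAt ℝ T (((coupledMap n γ T)^[t] z) k))
    (hexp : ∀ t < p, ∀ k : Fin n,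
      1 / lam ≤ |deriv T (((coupledMap n γ T)^[t] z) k)|) :
    ((1 - γ) ^ n * (lam⁻¹) ^ n / (1 - γ)) ^ p ≤
        |(fderiv ℝ ((coupledMap n γ T)^[p]) z).det| ∧
      (lam < 1 - γ →
        (1 < (1 - γ) / lam ∧
          ((1 - γ) / lam) ^ (n * p) / (1 - γ) ^ p ≤
            |(fderiv ℝ ((coupledMap n γ T)^[p]) z).det|)) :=
  abs_det_fderiv_coupledMap_iterate_ge_general n hn lam γ hlam hγ T p z hdiff hexp
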